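/- Let T be the infinite ternary tree with origin o, principal branches Y^(1), Y^(2), Y^(3) labeled in correspondence with the direction indexing of the rotor at o. Set the rotors along the rightmost path to infinity in Y^(3) initially pointing in direction 2 and all remaining rotors initially pointing in direction 1. Let R(m) be the number of chips among the first m sequential rotor-router walks started at o that return to o. Then R(m) = ⌊m/2⌋ for all m; in particular |m/2 − R(m)| ≤ 1/2, where m/2 is the expected number of returns for m independent random walks. -/

import Mathlib

/-!
The infinite `d`-regular tree with rotor-router walk.

Vertices are encoded as `Option (Fin d × List (Fin (d - 1)))`: `none` is the
origin `o`, and `some (b, w)` is the vertex of the `b`-th principal branch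
reached from the root of that branch by the path `w` (so `|some (b, w)| =
w.length + 1`).

Every vertex carries a rotor with `d` directions indexed by `ZMod d`, cycling
in increasing order.  At the origin the value `v` points to the root of the
`(v+1)`-st principal branch (directions `1, …, d` are indexed by values
`0, …, d - 1`).  At a non-origin vertex, a value `v < d - 1` points to the
child obtained by appending `v`, and the value `d - 1` (direction `d`) points
to the parent.  A rotor-router step first increments the rotor at the chip's
location, then moves the chip in the new direction.
-/

/-- Vertices of the infinite `d`-regular tree. -/
abbrev TV (d : ℕ) := Option (Fin d × List (Fin (d - 1)))

/-- Rotor configurations on the infinite `d`-regular tree. -/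
abbrev TConf (d : ℕ) := TV d → ZMod d

/-- One rotor-router step: increment the rotor at the chip's location, then
move the chip in the new direction. -/
def tstep (d : ℕ) (p : TConf d × TV d) : TConf d × TV d :=
  match p with
  | (C, none) =>
    let r := C none + 1
    let C' := Function.update C none r
    if h : r.val < d then (C', some (⟨r.val, h⟩, [])) else (C', none)
  | (C, some (b, w)) =>
    let r := C (some (b, w)) + 1
    let C' := Function.update C (some (b, w)) r
    if h : r.val < d - 1 then (C', some (b, w ++ [⟨r.val, h⟩]))
    else (C', if w = [] then none else some (b, w.dropLast))

/-- The number of edges in the path from the origin to a vertex. -/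
def depth (d : ℕ) : TV d → ℕ
  | none => 0
  | some (_, w) => w.length + 1

/-- The same step, but absorbing at the origin: used to track a chip from the
moment it has left the origin until it possibly returns there. -/
def tstepAbs (d : ℕ) (p : TConf d × TV d) : TConf d × TV d :=
  if p.2 = none then p else tstep d p

/-- The trajectory of a single chip started at the origin with rotor
configuration `C`: `traj d C k` is the state after `k + 1` rotor-router
steps, the walk being stopped (absorbed) if the chip returns to the origin. -/
def traj (d : ℕ) (C : TConf d) (k : ℕ) : TConf d × TV d :=
  (tstepAbs d)^[k] (tstep d (C, none))

/-- The chip started at the origin eventually returns to the origin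
(otherwise it escapes to infinity, visiting each vertex finitely often). -/
def chipReturns (d : ℕ) (C : TConf d) : Prop := ∃ k, (traj d C k).2 = none

/-- The rotor configuration left behind by a chip started at the origin: the
rotor at each vertex takes its eventual value along the trajectory (if the
chip returns this is the configuration upon return; if the chip escapes to
infinity it visits each vertex only finitely often, so each rotor is
eventually constant and the configuration is well-defined). -/
noncomputable def nextConf (d : ℕ) (C : TConf d) : TConf d := fun v =>
  haveI := Classical.dec (∃ c : ZMod d, ∃ K : ℕ, ∀ k, K ≤ k → (traj d C k).1 v = c)
  if h : ∃ c : ZMod d, ∃ K : ℕ, ∀ k, K ≤ k → (traj d C k).1 v = c then h.choose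
  else C v

/-- The rotor configuration seen by the `(j+1)`-st chip, when chips are
started at the origin one at a time, beginning from the configuration `C0`. -/
noncomputable def confSeq (d : ℕ) (C0 : TConf d) : ℕ → TConf d
  | 0 => C0
  | j + 1 => nextConf d (confSeq d C0 j)

/-- The `(j+1)`-st chip (`j = 0, 1, 2, …`) escapes to infinity. -/
def escapes (d : ℕ) (C0 : TConf d) (j : ℕ) : Prop :=
  ¬ chipReturns d (confSeq d C0 j)

/-- The initial rotor configuration of Proposition 4.2: on the infinite
ternary tree, with principal branches `Y⁽¹⁾, Y⁽²⁾, Y⁽³⁾` labeled in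
correspondence with the direction indexing of the rotor at the origin
(branch indices `0, 1, 2 : Fin 3`), the rotors along the rightmost path to
infinity in `Y⁽³⁾` (branch index `2`; always descending to the right child,
child index `1`) initially point in direction `2` (encoded by `1 : ZMod 3`),
and all remaining rotors initially point in direction `1` (encoded by
`0 : ZMod 3`). -/
def rrConf : TConf 3 := fun v =>
  match v with
  | none => 0
  | some (b, w) => if b = 2 ∧ ∀ i ∈ w, i = 1 then 1 else 0

/-!
Write `binConf n` for the rotors of a principal branch after `n` chips have entered it, starting
with every rotor pointing to child `0`. By strong induction on `n`, the chip entering a branch in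
state `binConf n` escapes if `n` is even and returns if `n` is odd, leaving `binConf (n + 1)`.
According to `n mod 4` it returns at once, escapes through child `0`, returns after returning from
child `1`, or returns from child `0` and then escapes through child `1`; the number of chips each
child has received has exactly the parity this requires.

The origin sends chip `j` to branch `(j + 1) mod 3`, which has by then received a number of chips
of the same parity as `j`, so chip `j` returns iff `j` is odd.
-/

open Filter Function

namespace BinaryBranch

/- A principal branch is a rooted binary tree; the position `none` stands for the origin, where
the chip is absorbed once it leaves the branch through its root. -/
abbrev Conf := List (Fin 2) → ZMod 3

abbrev State := Conf × Option (List (Fin 2))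

def step : State → State
  | (C, none) => (C, none)
  | (C, some w) =>
    let r := C w + 1
    let C' := update C w r
    if h : r.val < 2 then (C', some (w ++ [⟨r.val, h⟩]))
    else (C', if w = [] then none else some w.dropLast)

@[simp]
lemma step_none (C : Conf) : step (C, none) = (C, none) := rfl

@[simp]
lemma iterate_step_none (C : Conf) (k : ℕ) : step^[k] (C, none) = (C, none) :=
  iterate_fixed (step_none C) k

lemma step_of_eq_zero {C : Conf} {w : List (Fin 2)} (h : C w = 0) :
    step (C, some w) = (update C w 1, some (w ++ [1])) := by
  simp only [step, h, zero_add]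
  rfl

lemma step_of_eq_two {C : Conf} {w : List (Fin 2)} (h : C w = 2) :
    step (C, some w) = (update C w 0, some (w ++ [0])) := by
  simp only [step, h]
  rfl

lemma step_nil_of_eq_one {C : Conf} (h : C [] = 1) :
    step (C, some []) = (update C [] 2, none) := by
  simp only [step, h]
  rfl

def Reaches (s t : State) : Prop := ∃ k, step^[k] s = t

def Escapes (s : State) (F : Conf) : Prop :=
  (∀ k, (step^[k] s).2 ≠ none) ∧ ∀ w, ∀ᶠ k in atTop, (step^[k] s).1 w = F w

lemma Reaches.trans {s t u : State} (hst : Reaches s t) (htu : Reaches t u) : Reaches s u := by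
  obtain ⟨k, rfl⟩ := hst
  obtain ⟨l, rfl⟩ := htu
  exact ⟨l + k, iterate_add_apply step l k s⟩

lemma reaches_of_step_eq {s t : State} (h : step s = t) : Reaches s t := ⟨1, h⟩

lemma Reaches.exists_first {s : State} {F : Conf} (h : Reaches s (F, none)) :
    ∃ K, step^[K] s = (F, none) ∧ ∀ j < K, (step^[j] s).2 ≠ none := by
  obtain ⟨K, hK⟩ := h
  have hex : ∃ j, (step^[j] s).2 = none := ⟨K, by rw [hK]⟩
  refine ⟨Nat.find hex, ?_, fun j hj => Nat.find_min hex hj⟩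
  have hG : step^[Nat.find hex] s = ((step^[Nat.find hex] s).1, none) :=
    Prod.ext rfl (Nat.find_spec hex)
  obtain ⟨d, hd⟩ := Nat.exists_eq_add_of_le (Nat.find_min' hex (by rw [hK]))
  rw [hd, add_comm, iterate_add_apply, hG, iterate_step_none] at hK
  rw [hG, hK]

lemma Escapes.of_reaches {s t : State} {F : Conf} (hst : Reaches s t) (ht : Escapes t F) :
    Escapes s F := by
  obtain ⟨K, rfl⟩ := hst
  refine ⟨fun k hk => ht.1 k ?_, fun w => ?_⟩
  · rw [← iterate_add_apply, add_comm, iterate_add_apply,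
      show step^[k] s = ((step^[k] s).1, none) from Prod.ext rfl hk, iterate_step_none]
  · filter_upwards [(tendsto_sub_atTop_nat K).eventually (ht.2 w), eventually_ge_atTop K]
      with k hk hKk
    rwa [← iterate_add_apply, Nat.sub_add_cancel hKk] at hk

def subtree (c : Fin 2) (C : Conf) : Conf := fun w => C (c :: w)

def graft (c : Fin 2) (C E : Conf) : Conf
  | [] => C []
  | c' :: w => if c' = c then E w else C (c' :: w)

@[simp]
lemma graft_nil (c : Fin 2) (C E : Conf) : graft c C E [] = C [] := rfl

@[simp]
lemma subtree_graft_self (c : Fin 2) (C E : Conf) : subtree c (graft c C E) = E := by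
  funext w
  simp [subtree, graft]

@[simp]
lemma subtree_graft_of_ne {c c' : Fin 2} (h : c' ≠ c) (C E : Conf) :
    subtree c' (graft c C E) = subtree c' C := by
  funext w
  simp [subtree, graft, h]

@[simp]
lemma subtree_update_nil (c : Fin 2) (C : Conf) (x : ZMod 3) :
    subtree c (update C [] x) = subtree c C := by
  funext w
  simp [subtree]

lemma graft_subtree (c : Fin 2) (C : Conf) : graft c C (subtree c C) = C := by
  funext w
  rcases w with _ | ⟨c', w⟩
  · rfl
  · by_cases h : c' = c
    · subst h; simp [graft, subtree]
    · simp [graft, h]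

lemma update_graft (c : Fin 2) (C E : Conf) (u : List (Fin 2)) (x : ZMod 3) :
    update (graft c C E) (c :: u) x = graft c C (update E u x) := by
  funext w
  rcases w with _ | ⟨c', w⟩
  · simp [graft]
  · by_cases h : c' = c
    · subst h
      by_cases hw : w = u
      · subst hw; simp [graft]
      · simp [graft, hw]
    · simp [graft, h]

def liftPos (c : Fin 2) : Option (List (Fin 2)) → Option (List (Fin 2))
  | none => some []
  | some u => some (c :: u)

lemma liftPos_ne_none (c : Fin 2) (p : Option (List (Fin 2))) : liftPos c p ≠ none := by
  cases p <;> simp [liftPos]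

lemma step_graft (c : Fin 2) (C E : Conf) (u : List (Fin 2)) :
    step (graft c C E, some (c :: u)) =
      (graft c C (step (E, some u)).1, liftPos c (step (E, some u)).2) := by
  have hE : graft c C E (c :: u) = E u := by simp [graft]
  by_cases h : (E u + 1).val < 2
  · simp [step, hE, h, update_graft, liftPos]
  · by_cases hu : u = []
    · subst hu; simp [step, hE, h, update_graft, liftPos]
    · simp [step, hE, h, hu, update_graft, liftPos, List.dropLast_cons_of_ne_nil hu]

lemma iterate_step_graft {c : Fin 2} {C E : Conf} {u : List (Fin 2)} {k : ℕ}
    (h : ∀ j < k, (step^[j] (E, some u)).2 ≠ none) :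
    step^[k] (graft c C E, some (c :: u)) =
      (graft c C (step^[k] (E, some u)).1, liftPos c (step^[k] (E, some u)).2) := by
  induction k with
  | zero => rfl
  | succ k ih =>
    obtain ⟨v, hv⟩ := Option.ne_none_iff_exists'.mp (h k k.lt_succ_self)
    rw [iterate_succ_apply', iterate_succ_apply', ih (fun j hj => h j (by omega)),
      show step^[k] (E, some u) = ((step^[k] (E, some u)).1, some v) from Prod.ext rfl hv]
    exact step_graft c C _ v

lemma Reaches.of_subtree {c : Fin 2} {C F : Conf} {u : List (Fin 2)}
    (h : Reaches (subtree c C, some u) (F, none)) :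
    Reaches (C, some (c :: u)) (graft c C F, some []) := by
  obtain ⟨K, hK, hfirst⟩ := h.exists_first
  refine ⟨K, ?_⟩
  conv_lhs => rw [← graft_subtree c C]
  rw [iterate_step_graft hfirst, hK]
  rfl

lemma Escapes.of_subtree {c : Fin 2} {C F : Conf} {u : List (Fin 2)}
    (h : Escapes (subtree c C, some u) F) :
    Escapes (C, some (c :: u)) (graft c C F) := by
  have hk (k : ℕ) := graft_subtree c C ▸ iterate_step_graft (k := k) (c := c) (C := C)
    (fun j _ => h.1 j)
  refine ⟨fun k => by rw [hk]; exact liftPos_ne_none _ _, fun w => ?_⟩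
  rcases w with _ | ⟨c', w⟩
  · exact Eventually.of_forall fun k => by rw [hk]; rfl
  · by_cases hc : c' = c
    · subst hc
      filter_upwards [h.2 w] with k hkw
      rw [hk]
      simpa [graft] using hkw
    · exact Eventually.of_forall fun k => by rw [hk]; simp [graft, hc]

-- Of the first `n` chips entering a vertex, `childCount c n` move on to child `c`.
def childCount : Fin 2 → ℕ → ℕ
  | 0, n => (n - 1) / 2
  | 1, n => 2 * (n / 4) + min (n % 4) 1

def rootRotor (n : ℕ) : ZMod 3 :=
  if n = 0 then 0 else if n % 4 = 1 then 1 else if n % 4 = 3 then 0 else 2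

def binConf : ℕ → Conf
  | n, [] => rootRotor n
  | n, c :: w => binConf (childCount c n) w

@[simp]
lemma binConf_nil (n : ℕ) : binConf n [] = rootRotor n := rfl

@[simp]
lemma subtree_binConf (c : Fin 2) (n : ℕ) :
    subtree c (binConf n) = binConf (childCount c n) :=
  rfl

lemma eq_binConf {D : Conf} {n : ℕ} (hnil : D [] = rootRotor n)
    (h0 : subtree 0 D = binConf (childCount 0 n)) (h1 : subtree 1 D = binConf (childCount 1 n)) :
    D = binConf n := by
  funext w
  rcases w with _ | ⟨c, w⟩
  · exact hnil
  · fin_cases c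
    · exact congrFun h0 w
    · exact congrFun h1 w

lemma binConf_zero : binConf 0 = 0 := by
  funext w
  induction w with
  | nil => rfl
  | cons c w ih => fin_cases c <;> exact ih

lemma binConf_one (w : List (Fin 2)) : binConf 1 w = if ∀ i ∈ w, i = 1 then 1 else 0 := by
  induction w with
  | nil => rfl
  | cons c w ih =>
    fin_cases c
    · simp [binConf, childCount, binConf_zero]
    · simpa [binConf, childCount] using ih

def BinEscapes (n : ℕ) : Prop := Escapes (binConf n, some []) (binConf (n + 1))

def BinReturns (n : ℕ) : Prop := Reaches (binConf n, some []) (binConf (n + 1), none)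

lemma iterate_step_binConf_zero (k : ℕ) :
    step^[k] (binConf 0, some []) =
      (fun w => if w.length < k then binConf 1 w else 0, some (List.replicate k 1)) := by
  induction k with
  | zero => simp [binConf_zero]; rfl
  | succ k ih =>
    rw [iterate_succ_apply', ih, step_of_eq_zero (by simp), ← List.replicate_succ']
    congr 1
    funext w
    by_cases hw : w = List.replicate k 1
    · subst hw
      simp [binConf_one]
    · rw [update_of_ne hw]
      by_cases hlen : w.length = k
      · have hnot : ¬ ∀ i ∈ w, i = 1 := fun h => hw (List.eq_replicate_iff.mpr ⟨hlen, h⟩)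
        simp [hlen, binConf_one, hnot]
      · simp only [Nat.lt_succ_iff_lt_or_eq, hlen, or_false]

lemma binEscapes_zero : BinEscapes 0 := by
  refine ⟨fun k => by simp [iterate_step_binConf_zero], fun w => ?_⟩
  filter_upwards [eventually_gt_atTop w.length] with k hk
  simp [iterate_step_binConf_zero, hk]

lemma binReturns_of_mod_four_eq_one {n : ℕ} (hn : n % 4 = 1) : BinReturns n := by
  refine reaches_of_step_eq ?_
  rw [step_nil_of_eq_one (by simp [rootRotor, hn, show n ≠ 0 by omega])]
  congr 1
  refine eq_binConf (by simp [rootRotor, Nat.add_mod, hn]) ?_ ?_ <;>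
    simp only [subtree_update_nil, subtree_binConf] <;> congr 1 <;> simp [childCount] <;> omega

lemma binEscapes_of_mod_four_eq_two {n : ℕ} (hn : n % 4 = 2)
    (h : BinEscapes (childCount 0 n)) : BinEscapes n := by
  set D := update (binConf n) [] 0
  have hstep : step (binConf n, some []) = (D, some [0]) :=
    step_of_eq_two (by simp [rootRotor, hn, show n ≠ 0 by omega])
  have hF : graft 0 D (binConf (childCount 0 n + 1)) = binConf (n + 1) := by
    refine eq_binConf (by simp [D, rootRotor, Nat.add_mod, hn]) ?_ ?_
    · simp only [subtree_graft_self]; congr 1; simp [childCount]; omega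
    · simp only [subtree_graft_of_ne (show (1 : Fin 2) ≠ 0 by decide), D, subtree_update_nil,
        subtree_binConf]
      congr 1; simp [childCount]; omega
  rw [BinEscapes, ← hF]
  exact .of_reaches (reaches_of_step_eq hstep)
    (.of_subtree (by simp only [D, subtree_update_nil, subtree_binConf]; exact h))

lemma binReturns_of_mod_four_eq_three {n : ℕ} (hn : n % 4 = 3)
    (h : BinReturns (childCount 1 n)) : BinReturns n := by
  set D := update (binConf n) [] 1
  set G := graft 1 D (binConf (childCount 1 n + 1))
  have hstep : step (binConf n, some []) = (D, some [1]) :=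
    step_of_eq_zero (by simp [rootRotor, hn, show n ≠ 0 by omega])
  have hchild : Reaches (D, some [1]) (G, some []) :=
    .of_subtree (by simp only [D, subtree_update_nil, subtree_binConf]; exact h)
  have hback : step (G, some []) = (update G [] 2, none) := step_nil_of_eq_one (by simp [G, D])
  have hF : update G [] 2 = binConf (n + 1) := by
    refine eq_binConf (by simp [rootRotor, Nat.add_mod, hn]) ?_ ?_
    · simp only [subtree_update_nil, G, subtree_graft_of_ne (show (0 : Fin 2) ≠ 1 by decide), D,
        subtree_binConf]
      congr 1; simp [childCount]; omega
    · simp only [subtree_update_nil, G, subtree_graft_self]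
      congr 1; simp [childCount]; omega
  rw [BinReturns, ← hF]
  exact (reaches_of_step_eq hstep).trans (hchild.trans (reaches_of_step_eq hback))

lemma binEscapes_of_mod_four_eq_zero {n : ℕ} (hn : n % 4 = 0) (hn0 : n ≠ 0)
    (h0 : BinReturns (childCount 0 n)) (h1 : BinEscapes (childCount 1 n)) : BinEscapes n := by
  set D := update (binConf n) [] 0
  set G := graft 0 D (binConf (childCount 0 n + 1))
  set D' := update G [] 1
  have hstep : step (binConf n, some []) = (D, some [0]) :=
    step_of_eq_two (by simp [rootRotor, hn, hn0])
  have hchild0 : Reaches (D, some [0]) (G, some []) :=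
    .of_subtree (by simp only [D, subtree_update_nil, subtree_binConf]; exact h0)
  have hstep' : step (G, some []) = (D', some [1]) := step_of_eq_zero (by simp [G, D])
  have hchild1 : Escapes (D', some [1]) (graft 1 D' (binConf (childCount 1 n + 1))) :=
    .of_subtree (by
      simp only [D', subtree_update_nil, G, subtree_graft_of_ne (show (1 : Fin 2) ≠ 0 by decide),
        D, subtree_binConf]
      exact h1)
  have hF : graft 1 D' (binConf (childCount 1 n + 1)) = binConf (n + 1) := by
    refine eq_binConf (by simp [D', rootRotor, Nat.add_mod, hn]) ?_ ?_
    · simp only [subtree_graft_of_ne (show (0 : Fin 2) ≠ 1 by decide), D', subtree_update_nil, G,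
        subtree_graft_self]
      congr 1; simp [childCount]; omega
    · simp only [subtree_graft_self]
      congr 1; simp [childCount]; omega
  rw [BinEscapes, ← hF]
  exact .of_reaches ((reaches_of_step_eq hstep).trans (hchild0.trans (reaches_of_step_eq hstep')))
    hchild1

theorem binEscapes_and_binReturns (n : ℕ) :
    (n % 2 = 0 → BinEscapes n) ∧ (n % 2 = 1 → BinReturns n) := by
  induction n using Nat.strong_induction_on with
  | _ n ih =>
  obtain rfl | hn0 := eq_or_ne n 0
  · exact ⟨fun _ => binEscapes_zero, by simp⟩
  have hc0 : childCount 0 n = (n - 1) / 2 := rfl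
  have hc1 : childCount 1 n = 2 * (n / 4) + min (n % 4) 1 := rfl
  have : n % 4 = 0 ∨ n % 4 = 1 ∨ n % 4 = 2 ∨ n % 4 = 3 := by omega
  rcases this with hn | hn | hn | hn <;> refine ⟨fun h => ?_, fun h => ?_⟩ <;> try omega
  · exact binEscapes_of_mod_four_eq_zero hn hn0 ((ih _ (by omega)).2 (by omega))
      ((ih _ (by omega)).1 (by omega))
  · exact binReturns_of_mod_four_eq_one hn
  · exact binEscapes_of_mod_four_eq_two hn ((ih _ (by omega)).1 (by omega))
  · exact binReturns_of_mod_four_eq_three hn ((ih _ (by omega)).2 (by omega))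

end BinaryBranch

namespace TernaryTree

open BinaryBranch

def branch (b : Fin 3) (C : TConf 3) : Conf := fun w => C (some (b, w))

def graftBranch (b : Fin 3) (C : TConf 3) (E : Conf) : TConf 3
  | none => C none
  | some (b', w) => if b' = b then E w else C (some (b', w))

lemma graftBranch_none (b : Fin 3) (C : TConf 3) (E : Conf) : graftBranch b C E none = C none :=
  rfl

lemma graftBranch_some_self (b : Fin 3) (C : TConf 3) (E : Conf) (w : List (Fin 2)) :
    graftBranch b C E (some (b, w)) = E w :=
  if_pos rfl

lemma graftBranch_some_of_ne {b b' : Fin 3} (h : b' ≠ b) (C : TConf 3) (E : Conf)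
    (w : List (Fin 2)) : graftBranch b C E (some (b', w)) = C (some (b', w)) :=
  if_neg h

lemma graftBranch_branch (b : Fin 3) (C : TConf 3) : graftBranch b C (branch b C) = C := by
  funext v
  rcases v with _ | ⟨b', w⟩
  · rfl
  · by_cases h : b' = b
    · subst h; exact graftBranch_some_self _ _ _ w
    · exact graftBranch_some_of_ne h _ _ w

lemma update_graftBranch (b : Fin 3) (C : TConf 3) (E : Conf) (u : List (Fin 2)) (x : ZMod 3) :
    update (graftBranch b C E) (some (b, u)) x = graftBranch b C (update E u x) := by
  funext v
  rcases v with _ | ⟨b', w⟩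
  · rw [update_of_ne (by simp), graftBranch_none, graftBranch_none]
  · by_cases h : b' = b
    · subst h
      rw [graftBranch_some_self]
      by_cases hw : w = u
      · subst hw; rw [update_self, update_self]
      · rw [update_of_ne (by simpa using hw), update_of_ne hw, graftBranch_some_self]
    · rw [update_of_ne (by simp [h]), graftBranch_some_of_ne h, graftBranch_some_of_ne h]

lemma tstepAbs_graftBranch (b : Fin 3) (C : TConf 3) (E : Conf) (p : Option (List (Fin 2))) :
    tstepAbs 3 (graftBranch b C E, p.map (b, ·)) =
      (graftBranch b C (step (E, p)).1, (step (E, p)).2.map (b, ·)) := by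
  rcases p with _ | w
  · rfl
  · rw [tstepAbs, if_neg (by simp)]
    show tstep 3 (graftBranch b C E, some (b, w)) = _
    simp only [tstep, step]
    rw [graftBranch_some_self, update_graftBranch]
    by_cases h : (E w + 1).val < 2
    · rw [dif_pos (show (E w + 1).val < 3 - 1 from h), dif_pos h]
      rfl
    · rw [dif_neg (show ¬ (E w + 1).val < 3 - 1 from h), dif_neg h]
      by_cases hw : w = []
      · subst hw; rfl
      · rw [if_neg hw, if_neg hw]
        rfl

lemma iterate_tstepAbs_graftBranch (b : Fin 3) (C : TConf 3) (E : Conf)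
    (p : Option (List (Fin 2))) (k : ℕ) :
    (tstepAbs 3)^[k] (graftBranch b C E, p.map (b, ·)) =
      (graftBranch b C (step^[k] (E, p)).1, (step^[k] (E, p)).2.map (b, ·)) := by
  induction k with
  | zero => rfl
  | succ k ih => rw [iterate_succ_apply', iterate_succ_apply', ih, tstepAbs_graftBranch]

lemma traj_eq_graftBranch {C : TConf 3} {b : Fin 3} (hb : (C none + 1).val = b.val) (k : ℕ) :
    traj 3 C k =
      (graftBranch b (update C none (C none + 1)) (step^[k] (branch b C, some [])).1,
        (step^[k] (branch b C, some [])).2.map (b, ·)) := by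
  have hfirst : tstep 3 (C, none) = (update C none (C none + 1), some (b, [])) := by
    simp only [tstep]
    rw [dif_pos (ZMod.val_lt _), show (⟨(C none + 1).val, ZMod.val_lt _⟩ : Fin 3) = b from
      Fin.ext hb]
  have hbranch : branch b (update C none (C none + 1)) = branch b C := by
    funext w
    exact update_of_ne (by simp) _ _
  rw [traj, hfirst]
  conv_lhs => rw [← graftBranch_branch b (update C none (C none + 1)), hbranch]
  exact iterate_tstepAbs_graftBranch b _ _ (some []) k

lemma nextConf_eq_of_eventually {d : ℕ} {C : TConf d} {v : TV d} {c : ZMod d}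
    (h : ∀ᶠ k in atTop, (traj d C k).1 v = c) : nextConf d C v = c := by
  have hex : ∃ c : ZMod d, ∃ K : ℕ, ∀ k, K ≤ k → (traj d C k).1 v = c :=
    ⟨c, eventually_atTop.mp h⟩
  rw [nextConf, dif_pos hex]
  obtain ⟨K, hK⟩ := hex.choose_spec
  obtain ⟨k, hk, hkc⟩ := ((eventually_ge_atTop K).and h).exists
  exact (hK k hk).symm.trans hkc

lemma chipReturns_and_nextConf_of_reaches {C : TConf 3} {b : Fin 3}
    (hb : (C none + 1).val = b.val) {F : Conf} (h : Reaches (branch b C, some []) (F, none)) :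
    chipReturns 3 C ∧ nextConf 3 C = graftBranch b (update C none (C none + 1)) F := by
  obtain ⟨K, hK⟩ := h
  have htraj : ∀ k ≥ K, traj 3 C k = (graftBranch b (update C none (C none + 1)) F, none) := by
    intro k hk
    rw [traj_eq_graftBranch hb, ← Nat.sub_add_cancel hk, iterate_add_apply, hK, iterate_step_none]
    rfl
  refine ⟨⟨K, by rw [htraj K le_rfl]⟩, funext fun v => nextConf_eq_of_eventually ?_⟩
  filter_upwards [eventually_ge_atTop K] with k hk
  rw [htraj k hk]

lemma not_chipReturns_and_nextConf_of_escapes {C : TConf 3} {b : Fin 3}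
    (hb : (C none + 1).val = b.val) {F : Conf} (h : Escapes (branch b C, some []) F) :
    ¬ chipReturns 3 C ∧ nextConf 3 C = graftBranch b (update C none (C none + 1)) F := by
  refine ⟨fun ⟨k, hk⟩ => h.1 k ?_, funext fun v => nextConf_eq_of_eventually ?_⟩
  · rwa [traj_eq_graftBranch hb, Option.map_eq_none_iff] at hk
  · simp only [traj_eq_graftBranch hb]
    rcases v with _ | ⟨b', w⟩
    · exact Eventually.of_forall fun k => rfl
    · by_cases hb' : b' = b
      · subst hb'
        filter_upwards [h.2 w] with k hk
        rw [graftBranch_some_self, graftBranch_some_self, hk]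
      · exact Eventually.of_forall fun k => by
          rw [graftBranch_some_of_ne hb', graftBranch_some_of_ne hb']

/- Chip `i` enters branch `(i + 1) % 3`; the initial rotors of branch `2` are those left behind by
one chip in a branch whose rotors all point to child `0`. -/
def branchCount : Fin 3 → ℕ → ℕ
  | 0, j => j / 3
  | 1, j => (j + 2) / 3
  | 2, j => (j + 1) / 3 + 1

def treeConf (j : ℕ) : TConf 3
  | none => (j : ZMod 3)
  | some (b, w) => binConf (branchCount b j) w

lemma treeConf_zero : treeConf 0 = rrConf := by
  funext v
  rcases v with _ | ⟨b, w⟩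
  · rfl
  · fin_cases b
    · simp [treeConf, rrConf, branchCount, binConf_zero]
    · simp [treeConf, rrConf, branchCount, binConf_zero]
    · simp [treeConf, rrConf, branchCount, binConf_one]

lemma branchCount_mod_two {b : Fin 3} {j : ℕ} (hb : b.val = (j + 1) % 3) :
    branchCount b j % 2 = j % 2 := by
  fin_cases b <;> simp [branchCount] at hb ⊢ <;> omega

lemma branchCount_succ {b : Fin 3} {j : ℕ} (hb : b.val = (j + 1) % 3) :
    branchCount b (j + 1) = branchCount b j + 1 := by
  fin_cases b <;> simp [branchCount] at hb ⊢ <;> omega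

lemma branchCount_succ_of_ne {b b' : Fin 3} {j : ℕ} (hb : b.val = (j + 1) % 3) (h : b' ≠ b) :
    branchCount b' (j + 1) = branchCount b' j := by
  fin_cases b <;> fin_cases b' <;> simp [branchCount] at hb h ⊢ <;> omega

lemma graftBranch_treeConf {b : Fin 3} {j : ℕ} (hb : b.val = (j + 1) % 3) :
    graftBranch b (update (treeConf j) none (treeConf j none + 1))
      (binConf (branchCount b j + 1)) = treeConf (j + 1) := by
  funext v
  rcases v with _ | ⟨b', w⟩
  · rw [graftBranch_none, update_self]
    simp [treeConf]
  · by_cases hb' : b' = b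
    · subst hb'
      rw [graftBranch_some_self, ← branchCount_succ hb]
      rfl
    · rw [graftBranch_some_of_ne hb', update_of_ne (by simp)]
      show _ = binConf (branchCount b' (j + 1)) w
      rw [branchCount_succ_of_ne hb hb']
      rfl

lemma nextConf_treeConf_and_chipReturns_iff (j : ℕ) :
    nextConf 3 (treeConf j) = treeConf (j + 1) ∧ (chipReturns 3 (treeConf j) ↔ j % 2 = 1) := by
  let b : Fin 3 := ⟨(j + 1) % 3, Nat.mod_lt _ (by norm_num)⟩
  have hb : (treeConf j none + 1).val = b.val := by
    rw [show treeConf j none + 1 = ((j + 1 : ℕ) : ZMod 3) by simp [treeConf], ZMod.val_natCast]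
  have hpar := branchCount_mod_two (b := b) (j := j) rfl
  rcases Nat.mod_two_eq_zero_or_one j with hj | hj
  · have := not_chipReturns_and_nextConf_of_escapes hb
      ((binEscapes_and_binReturns (branchCount b j)).1 (by omega))
    exact ⟨this.2.trans (graftBranch_treeConf rfl), by simpa [hj] using this.1⟩
  · have := chipReturns_and_nextConf_of_reaches hb
      ((binEscapes_and_binReturns (branchCount b j)).2 (by omega))
    exact ⟨this.2.trans (graftBranch_treeConf rfl), by simpa [hj] using this.1⟩

lemma confSeq_rrConf (j : ℕ) : confSeq 3 rrConf j = treeConf j := by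
  induction j with
  | zero => exact treeConf_zero.symm
  | succ j ih => rw [confSeq, ih, (nextConf_treeConf_and_chipReturns_iff j).1]

lemma chipReturns_confSeq_rrConf_iff (j : ℕ) :
    chipReturns 3 (confSeq 3 rrConf j) ↔ j % 2 = 1 := by
  rw [confSeq_rrConf]
  exact (nextConf_treeConf_and_chipReturns_iff j).2

end TernaryTree

lemma abs_div_two_sub_nat_div_two_le (m : ℕ) :
    |(m : ℝ) / 2 - ((m / 2 : ℕ) : ℝ)| ≤ 1 / 2 := by
  rcases Nat.even_or_odd' m with ⟨k, rfl | rfl⟩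
  · simp
  · rw [show (2 * k + 1) / 2 = k by omega]
    push_cast
    rw [show (2 * (k : ℝ) + 1) / 2 - k = 1 / 2 by ring, abs_of_pos (by norm_num)]

/-- With the initial rotor configuration `rrConf`, the number `R(m)` of chips
among the first `m` sequential rotor-router walks started at the origin that
return to the origin is exactly `⌊m/2⌋`; in particular
`|m/2 − R(m)| ≤ 1/2`, where `m/2 = E(m)` is the expected number of returns
for `m` independent random walks. -/
theorem stmt11 (m : ℕ) :
    {j : ℕ | j < m ∧ chipReturns 3 (confSeq 3 rrConf j)}.ncard = m / 2 ∧
    |(m : ℝ) / 2 -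
        ({j : ℕ | j < m ∧ chipReturns 3 (confSeq 3 rrConf j)}.ncard : ℝ)| ≤ 1 / 2 := by
  have hset : {j : ℕ | j < m ∧ chipReturns 3 (confSeq 3 rrConf j)} =
      ↑({j ∈ Finset.range m | j ≡ 1 [MOD 2]}) := by
    ext j
    simp [TernaryTree.chipReturns_confSeq_rrConf_iff, Nat.ModEq]
  have hcard : {j : ℕ | j < m ∧ chipReturns 3 (confSeq 3 rrConf j)}.ncard = m / 2 := by
    rw [hset, Set.ncard_coe_finset, ← Nat.count_eq_card_filter_range,
      Nat.count_modEq_card _ two_pos, if_neg (by omega), add_zero]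
  exact ⟨hcard, hcard ▸ abs_div_two_sub_nat_div_two_le m⟩
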